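/- arXiv:0711.0072 — 3 statements merged into one kernel-verified Lean document; each statement's English description precedes it below -/
import Mathlib

section
/- For any group G, the set LO(G) of positive cones of left orders on G, viewed as a subset of the product space {0,1}^G (identifying a subset with its indicator function, with the product topology), is closed, hence compact. -/
/-- `P : G → Bool` (an indicator function of a subset of `G`) is the positive cone of a
left order: closed under multiplication, and `G \ {1}` is the disjoint union of `P` and
`P⁻¹`. -/
def IsLeftOrderCone {G : Type*} [Group G] (P : G → Bool) : Prop :=
  (∀ a b : G, P a = true → P b = true → P (a * b) = true) ∧
  (∀ g : G, g ≠ 1 ↔ Xor' (P g = true) (P g⁻¹ = true))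

/-- The space of positive cones of left orders on `G`, as a subset of `{0,1}^G`
(with the product topology). -/
def LOset (G : Type*) [Group G] : Set (G → Bool) := {P | IsLeftOrderCone P}

/-! Each defining condition of a positive cone involves only finitely many coordinates of
`P ∈ {0,1}^G`, so it is the preimage of a subset of a finite discrete space under a continuous
map, hence closed. `LOset G` is an intersection of such sets, and a closed subset of the compact
space `{0,1}^G` is compact. -/

open Set

theorem isClosed_setOf_comp {X Y : Type*} [TopologicalSpace X] [TopologicalSpace Y]
    [DiscreteTopology Y] {f : X → Y} (hf : Continuous f) (p : Y → Prop) :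
    IsClosed {x | p (f x)} :=
  (isClosed_discrete {y | p y}).preimage hf

section LeftOrderCone

variable {G : Type*} [Group G]

theorem isClosed_setOf_mul_mem (a b : G) :
    IsClosed {P : G → Bool | P a = true → P b = true → P (a * b) = true} :=
  isClosed_setOf_comp (f := fun P : G → Bool => (P a, P b, P (a * b))) (by fun_prop)
    fun t => t.1 = true → t.2.1 = true → t.2.2 = true

theorem isClosed_setOf_ne_one_iff_xor (g : G) :
    IsClosed {P : G → Bool | g ≠ 1 ↔ Xor' (P g = true) (P g⁻¹ = true)} :=
  isClosed_setOf_comp (f := fun P : G → Bool => (P g, P g⁻¹)) (by fun_prop)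
    fun t => g ≠ 1 ↔ Xor' (t.1 = true) (t.2 = true)

variable (G)

theorem isClosed_LOset : IsClosed (LOset G) := by
  simp only [LOset, IsLeftOrderCone, ofPred_and, ofPred_forall]
  exact (isClosed_iInter fun a => isClosed_iInter fun b => isClosed_setOf_mul_mem a b).inter
    (isClosed_iInter isClosed_setOf_ne_one_iff_xor)

end LeftOrderCone

theorem stmt_3 (G : Type*) [Group G] : IsClosed (LOset G) ∧ IsCompact (LOset G) :=
  ⟨isClosed_LOset G, (isClosed_LOset G).isCompact⟩
end

section
/- For n ≥ 2, the space LO(ℤⁿ) of positive cones of left orders on the free abelian group ℤⁿ has no isolated points. -/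
/-- `P : M → Bool` is the positive cone of a left order on the additive group `M`:
closed under addition, and `M \ {0}` is the disjoint union of `P` and `-P`. -/
def IsAddLeftOrderCone {M : Type*} [AddGroup M] (P : M → Bool) : Prop :=
  (∀ a b : M, P a = true → P b = true → P (a + b) = true) ∧
  (∀ g : M, g ≠ 0 ↔ Xor' (P g = true) (P (-g) = true))

/-- The space of positive cones of left orders, as a subset of `{0,1}^M`. -/
def AddLOset (M : Type*) [AddGroup M] : Set (M → Bool) := {P | IsAddLeftOrderCone P}

/-!
If `{P}` were open, the values of `P` on a finite set `F` would determine `P`. A nontrivial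
`ℕ`-combination of nonzero elements of `P` is never `0`; by Carathéodory and the rationality
of barycentric coordinates of integer points, `0` is then not in the real convex hull of the
nonzero elements of `P ∩ (F ∪ -F)`. Hahn–Banach and rational approximation give an integer
functional `f` positive on them. Ordering first by `f` and then by `-P` on `ker f` gives a cone
agreeing with `P` on `F`, and it differs from `P` because `ker f ≠ 0` in rank at least two.
-/

namespace IsAddLeftOrderCone

section AddGroup

variable {M : Type*} [AddGroup M] {P : M → Bool}

theorem neg_eq_not (hP : IsAddLeftOrderCone P) {x : M} (hx : x ≠ 0) : P (-x) = !P x := by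
  have : Xor (P x = true) (P (-x) = true) := (hP.2 x).1 hx
  revert this
  cases P x <;> cases P (-x) <;> simp

theorem add_ne_zero (hP : IsAddLeftOrderCone P) {a b : M} (ha : a ≠ 0 ∧ P a = true)
    (hb : b ≠ 0 ∧ P b = true) : a + b ≠ 0 ∧ P (a + b) = true := by
  refine ⟨fun hab => ?_, hP.1 a b ha.2 hb.2⟩
  have := hP.neg_eq_not ha.1
  rw [← eq_neg_of_add_eq_zero_right hab, hb.2, ha.2] at this
  exact Bool.noConfusion this

theorem nsmul_ne_zero (hP : IsAddLeftOrderCone P) {x : M} (hx : x ≠ 0 ∧ P x = true) {m : ℕ}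
    (hm : m ≠ 0) : m • x ≠ 0 ∧ P (m • x) = true := by
  induction m with
  | zero => exact absurd rfl hm
  | succ k ih =>
    rcases eq_or_ne k 0 with rfl | hk
    · simpa using hx
    · rw [succ_nsmul]
      exact hP.add_ne_zero (ih hk) hx

theorem comp_neg (hP : IsAddLeftOrderCone P) : IsAddLeftOrderCone (fun x => P (-x)) := by
  refine ⟨fun a b ha hb => ?_, fun g => ?_⟩
  · simpa [neg_add_rev] using hP.1 _ _ hb ha
  · simpa [neg_neg, xor_comm] using hP.2 (-g)

end AddGroup

theorem sum_nsmul_ne_zero {M ι : Type*} [AddCommGroup M] {P : M → Bool}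
    (hP : IsAddLeftOrderCone P) {s : Finset ι} (hs : s.Nonempty) {t : ι → M}
    (ht : ∀ i ∈ s, t i ≠ 0 ∧ P (t i) = true) {m : ι → ℕ} (hm : ∀ i ∈ s, m i ≠ 0) :
    ∑ i ∈ s, m i • t i ≠ 0 :=
  (Finset.sum_induction_nonempty _ (fun x => x ≠ 0 ∧ P x = true) (fun _ _ => hP.add_ne_zero)
    hs fun i hi => hP.nsmul_ne_zero (ht i hi) (hm i hi)).1

end IsAddLeftOrderCone

section LexCone

variable {M Γ : Type*} [AddGroup M] [AddCommGroup Γ] [LinearOrder Γ]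

def lexCone (f : M →+ Γ) (R : M → Bool) : M → Bool :=
  fun x => decide (0 < f x ∨ f x = 0 ∧ R x = true)

theorem lexCone_of_eq_zero {f : M →+ Γ} {x : M} (hx : f x = 0) (R : M → Bool) :
    lexCone f R x = R x := by
  simp [lexCone, hx]

theorem lexCone_of_ne_zero {f : M →+ Γ} {x : M} (hx : f x ≠ 0) (R : M → Bool) :
    lexCone f R x = decide (0 < f x) := by
  simp [lexCone, hx]

theorem isAddLeftOrderCone_lexCone [IsOrderedAddMonoid Γ] {R : M → Bool}
    (hR : IsAddLeftOrderCone R) (f : M →+ Γ) : IsAddLeftOrderCone (lexCone f R) := by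
  refine ⟨fun a b ha hb => ?_, fun g => ?_⟩
  · simp only [lexCone, decide_eq_true_eq, map_add] at ha hb ⊢
    rcases ha with ha | ⟨ha, ha'⟩ <;> rcases hb with hb | ⟨hb, hb'⟩
    · exact .inl (add_pos ha hb)
    · exact .inl (by rwa [hb, add_zero])
    · exact .inl (by rwa [ha, zero_add])
    · exact .inr ⟨by rw [ha, hb, add_zero], hR.1 a b ha' hb'⟩
  · rcases lt_trichotomy (f g) 0 with h | h | h
    · have hg : g ≠ 0 := by rintro rfl; simp at h
      show _ ↔ Xor _ _
      simp [lexCone, h, h.ne, h.not_gt, hg]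
    · simpa [lexCone, h] using hR.2 g
    · have hg : g ≠ 0 := by rintro rfl; simp at h
      show _ ↔ Xor _ _
      simp [lexCone, h, h.ne', h.not_gt, hg]

theorem lexCone_apply_eq_of_pos [IsOrderedAddMonoid Γ] {P : M → Bool} (hP : IsAddLeftOrderCone P)
    {f : M →+ Γ} {x : M} (hx : x ≠ 0) (hpos : P x = true → 0 < f x)
    (hneg : P (-x) = true → 0 < f (-x)) (R : M → Bool) : lexCone f R x = P x := by
  cases hPx : P x
  · have hfx : f x < 0 := neg_pos.1 (by simpa using hneg (by simp [hP.neg_eq_not hx, hPx]))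
    rw [lexCone_of_ne_zero hfx.ne]
    simpa using hfx.le
  · have hfx := hpos hPx
    rw [lexCone_of_ne_zero hfx.ne']
    simpa using hfx

end LexCone

open Matrix

universe u

theorem exists_pos_nat_mul_eq_intCast {κ : Type*} [Fintype κ] (r : κ → ℚ) :
    ∃ N : ℕ, 0 < N ∧ ∀ k, ∃ m : ℤ, (N : ℚ) * r k = m := by
  refine ⟨∏ k, (r k).den, Finset.prod_pos fun k _ => (r k).pos, fun k => ?_⟩
  obtain ⟨d, hd⟩ := Finset.dvd_prod_of_mem (fun k => (r k).den) (Finset.mem_univ k)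
  refine ⟨d * (r k).num, ?_⟩
  rw [hd, Nat.cast_mul, mul_comm ((r k).den : ℚ), mul_assoc, Rat.den_mul_eq_num]
  push_cast; rfl

/- Barycentric coordinates with respect to affinely independent points are unique, so a
`ℚ`-linear retraction `ℝ → ℚ` leaves them unchanged: they are rational. -/
theorem exists_rat_weights_of_affineIndependent {κ ι : Type*} [Fintype κ] {t : κ → ι → ℤ}
    (hind : AffineIndependent ℝ fun k i => (t k i : ℝ)) {w : κ → ℝ} (hw1 : ∑ k, w k = 1)
    (hw : ∀ i, ∑ k, w k * t k i = 0) :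
    ∃ r : κ → ℚ, (∀ k, w k = r k) ∧ ∀ i, ∑ k, r k * t k i = 0 := by
  obtain ⟨π, hπ⟩ := (Algebra.linearMap ℚ ℝ).exists_leftInverse_of_injective
    (LinearMap.ker_eq_bot.2 (Rat.cast_injective (α := ℝ)))
  replace hπ : ∀ q : ℚ, π q = q := LinearMap.congr_fun hπ
  set r : κ → ℚ := fun k => π (w k)
  have hπ_sum : ∀ a : κ → ℚ, π (∑ k, w k * a k) = ∑ k, r k * a k := fun a => by
    simp only [map_sum, r]
    refine Finset.sum_congr rfl fun k _ => ?_
    rw [mul_comm, ← Rat.smul_def, map_smul, smul_eq_mul, mul_comm]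
  have hr1 : ∑ k, r k = 1 := by
    simpa [hw1, (by simpa using hπ 1 : π 1 = 1)] using (hπ_sum 1).symm
  have hrt : ∀ i, ∑ k, r k * t k i = 0 := fun i => by
    simpa [hw, hπ] using (hπ_sum fun k => t k i).symm
  suffices hwr : w = fun k => (r k : ℝ) from ⟨r, congrFun hwr, hrt⟩
  refine (affineIndependent_iff_eq_of_fintype_affineCombination_eq ℝ _).1 hind _ _ hw1
    (by exact_mod_cast hr1) ?_
  rw [Finset.affineCombination_eq_linear_combination _ _ _ hw1,
    Finset.affineCombination_eq_linear_combination _ _ _ (by exact_mod_cast hr1)]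
  ext i
  have hrt' : ∑ k, (r k : ℝ) * t k i = 0 := by exact_mod_cast hrt i
  simpa [mul_comm, hw i] using hrt'.symm

theorem exists_nat_relation_of_zero_mem_convexHull {ι : Type u} {T : Set (ι → ℤ)}
    (h : (0 : ι → ℝ) ∈ convexHull ℝ ((fun t i => (t i : ℝ)) '' T)) :
    ∃ (κ : Type u) (_ : Fintype κ) (t : κ → ι → ℤ) (m : κ → ℕ),
      Nonempty κ ∧ (∀ k, t k ∈ T) ∧ (∀ k, m k ≠ 0) ∧ ∑ k, m k • t k = 0 := by
  obtain ⟨κ, _, z, w, hzT, hind, hw0, hw1, hwz⟩ := eq_pos_convex_span_of_mem_convexHull h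
  choose t htT htz using fun k => hzT ⟨k, rfl⟩
  obtain rfl : (fun k i => (t k i : ℝ)) = z := funext htz
  obtain ⟨r, hwr, hrt⟩ := exists_rat_weights_of_affineIndependent hind hw1 fun i => by
    simpa [mul_comm] using congrFun hwz i
  obtain ⟨N, hN, hm⟩ := exists_pos_nat_mul_eq_intCast r
  choose m hm using hm
  have hm0 : ∀ k, 0 < m k := fun k => by
    have hr0 : 0 < r k := by exact_mod_cast hwr k ▸ hw0 k
    exact_mod_cast hm k ▸ mul_pos (Nat.cast_pos.2 hN) hr0
  lift m to κ → ℕ using fun k => (hm0 k).le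
  refine ⟨κ, inferInstance, t, m, ?_, htT, fun k => by simpa using (hm0 k).ne', ?_⟩
  · by_contra hκ
    have := not_nonempty_iff.1 hκ
    simp at hw1
  · ext i
    have h : ((∑ k, (m k : ℤ) * t k i : ℤ) : ℚ) = N * ∑ k, r k * t k i := by
      push_cast
      simp only [Finset.mul_sum, ← mul_assoc, hm]
      push_cast; rfl
    rw [hrt, mul_zero] at h
    simpa using (by exact_mod_cast h : ∑ k, (m k : ℤ) * t k i = 0)

variable {ι : Type u} [Fintype ι]

theorem exists_int_dotProduct_pos_of_zero_notMem_convexHull {T : Finset (ι → ℤ)}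
    (h : (0 : ι → ℝ) ∉ convexHull ℝ ((fun (t : ι → ℤ) i => (t i : ℝ)) '' T)) :
    ∃ c : ι → ℤ, ∀ t ∈ T, 0 < t ⬝ᵥ c := by
  classical
  obtain ⟨f, u, hf0, hfT⟩ := geometric_hahn_banach_point_closed (convex_convexHull ℝ _)
    ((T.finite_toSet.image _).isCompact_convexHull ℝ).isClosed h
  let V : Set (ι → ℝ) := {y | ∀ t ∈ T, 0 < (fun i => (t i : ℝ)) ⬝ᵥ y}
  have hV : IsOpen V := by
    simp only [V, Set.ofPred_forall]
    exact isOpen_biInter_finset fun t _ =>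
      isOpen_lt continuous_const (continuous_const.dotProduct continuous_id)
  rw [map_zero] at hf0
  have hfV : (fun i => f fun j => if i = j then 1 else 0) ∈ V := fun t ht => by
    have := hfT _ (subset_convexHull ℝ _ ⟨t, ht, rfl⟩)
    have hf := f.toLinearMap.pi_apply_eq_sum_univ fun i => (t i : ℝ)
    simp only [ContinuousLinearMap.coe_coe, smul_eq_mul] at hf
    simp only [dotProduct]
    linarith
  obtain ⟨y, hyV⟩ :=
    (DenseRange.piMap fun _ => Rat.denseRange_cast (𝕜 := ℝ)).exists_mem_open hV ⟨_, hfV⟩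
  obtain ⟨N, hN, hc⟩ := exists_pos_nat_mul_eq_intCast y
  choose c hc using hc
  refine ⟨c, fun t ht => ?_⟩
  have h : ((t ⬝ᵥ c : ℤ) : ℚ) = N * ((fun i => (t i : ℚ)) ⬝ᵥ y) := by
    simp only [dotProduct, Finset.mul_sum]
    push_cast
    exact Finset.sum_congr rfl fun i _ => by rw [← hc]; ring
  have hyt : 0 < (fun i => (t i : ℚ)) ⬝ᵥ y := by
    have := hyV t ht
    simp only [dotProduct, Pi.map_apply] at this ⊢
    exact_mod_cast this
  exact_mod_cast h ▸ mul_pos (Nat.cast_pos.2 hN) hyt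

theorem IsAddLeftOrderCone.exists_int_dotProduct_pos {P : (ι → ℤ) → Bool}
    (hP : IsAddLeftOrderCone P) (T : Finset (ι → ℤ))
    (hT : ∀ t ∈ T, t ≠ 0 ∧ P t = true) :
    ∃ c : ι → ℤ, ∀ t ∈ T, 0 < t ⬝ᵥ c := by
  refine exists_int_dotProduct_pos_of_zero_notMem_convexHull fun h => ?_
  obtain ⟨κ, _, t, m, _, htT, hm, hsum⟩ := exists_nat_relation_of_zero_mem_convexHull h
  exact hP.sum_nsmul_ne_zero Finset.univ_nonempty (fun k _ => hT _ (htT k)) (fun k _ => hm k) hsum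

theorem IsAddLeftOrderCone.exists_ne_forall_mem_eq [Nontrivial ι]
    {P : (ι → ℤ) → Bool} (hP : IsAddLeftOrderCone P) (F : Finset (ι → ℤ)) :
    ∃ Q, IsAddLeftOrderCone Q ∧ Q ≠ P ∧ ∀ x ∈ F, Q x = P x := by
  classical
  obtain ⟨c, hc⟩ := hP.exists_int_dotProduct_pos
    ((F ∪ F.image Neg.neg).filter fun x => x ≠ 0 ∧ P x = true) (by simp)
  let f : (ι → ℤ) →+ ℤ := AddMonoidHom.mk' (· ⬝ᵥ c) fun a b => add_dotProduct a b c
  obtain ⟨z, hz0, hfz⟩ := exists_ne_zero_dotProduct_eq_zero c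
  refine ⟨lexCone f fun x => P (-x), isAddLeftOrderCone_lexCone hP.comp_neg f, fun h => ?_,
    fun x hx => ?_⟩
  · have := congrFun h z
    rw [lexCone_of_eq_zero hfz, hP.neg_eq_not hz0] at this
    cases P z <;> simp at this
  · rcases eq_or_ne x 0 with rfl | hx0
    · rw [lexCone_of_eq_zero (map_zero f), neg_zero]
    · refine lexCone_apply_eq_of_pos hP hx0 (f := f) (fun hPx => hc x ?_)
        (fun hPx => hc (-x) ?_) _ <;> simp [hx, hx0, hPx]

theorem exists_finset_eq_of_isOpen_singleton {α β : Type*} [TopologicalSpace β]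
    {X : Set (α → β)} {x : X} (h : IsOpen ({x} : Set X)) :
    ∃ F : Finset α, ∀ y ∈ X, (∀ a ∈ F, y a = (x : α → β) a) → y = x := by
  obtain ⟨t, ht, hxt⟩ := isOpen_induced_iff.1 h
  obtain ⟨F, u, hu, hFu⟩ := isOpen_pi_iff.1 ht x (hxt.symm ▸ rfl : x ∈ Subtype.val ⁻¹' t)
  refine ⟨F, fun y hy hyx => ?_⟩
  have : (⟨y, hy⟩ : X) ∈ ({x} : Set X) :=
    hxt ▸ hFu fun a ha => by simpa [hyx a ha] using (hu a ha).2
  exact congrArg Subtype.val this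

theorem stmt_9 (n : ℕ) (hn : 2 ≤ n) :
    ∀ x : AddLOset (Fin n → ℤ), ¬ IsOpen ({x} : Set (AddLOset (Fin n → ℤ))) := by
  have := Fin.nontrivial_iff_two_le.2 hn
  rintro ⟨P, hP⟩ hx
  obtain ⟨F, hF⟩ := exists_finset_eq_of_isOpen_singleton hx
  obtain ⟨Q, hQ, hQP, hQF⟩ := hP.exists_ne_forall_mem_eq F
  exact hQP (hF Q hQ hQF)
end

section
/- For n ≥ 2, the set LO(ℤⁿ) of positive cones of left orders on ℤⁿ is uncountable. -/
/-!
For transcendental `α`, the map `v ↦ ∑ i, v i * α ^ i` embeds `ℤⁿ` into `ℝ`, so pulling back the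
positive reals gives a positive cone. The vector `(p, -q, 0, …)` lies in this cone iff `q * α < p`,
so a rational strictly between `α < β` separates their cones; and there are uncountably many
transcendental reals.
-/

theorem Transcendental.linearIndependent_pow {R A : Type*} [CommRing R] [Ring A] [Algebra R A]
    {x : A} (hx : Transcendental R x) : LinearIndependent R fun i : ℕ => x ^ i := by
  have h := (Polynomial.linearIndependent_powers_iff_aeval (Algebra.lmul R A x) 1).2 fun p hp => by
    rw [Polynomial.aeval_algHom_apply, Algebra.coe_lmul_eq_mul, LinearMap.mul_apply', mul_one] at hp
    exact transcendental_iff.1 hx p hp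
  have hpow (n : ℕ) : (Algebra.lmul R A x ^ n) 1 = x ^ n := by
    rw [← map_pow, Algebra.coe_lmul_eq_mul, LinearMap.mul_apply', mul_one]
  simpa only [hpow] using h

namespace AddMonoidHom

variable {M G : Type*} [AddGroup M] [AddCommGroup G] [LinearOrder G] [IsOrderedAddMonoid G]

def posCone (f : M →+ G) : M → Bool := fun v => decide (0 < f v)

theorem isAddLeftOrderCone_posCone {f : M →+ G} (hf : Function.Injective f) :
    IsAddLeftOrderCone f.posCone := by
  refine ⟨fun a b ha hb => ?_, fun g => ?_⟩
  · simp only [posCone, decide_eq_true_eq, map_add] at *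
    exact add_pos ha hb
  · simp only [posCone, decide_eq_true_eq, map_neg, Left.neg_pos_iff, ne_eq,
      ← (injective_iff_map_eq_zero' f).1 hf]
    constructor
    · intro h
      rcases lt_or_gt_of_ne h with h | h
      · exact Or.inr ⟨h, h.asymm⟩
      · exact Or.inl ⟨h, h.asymm⟩
    · rintro (⟨h, -⟩ | ⟨h, -⟩)
      exacts [h.ne', h.ne]

end AddMonoidHom

noncomputable def powCone (n : ℕ) (α : ℝ) : (Fin n → ℤ) → Bool :=
  (Fintype.linearCombination ℤ fun i : Fin n => α ^ (i : ℕ)).toAddMonoidHom.posCone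

theorem isAddLeftOrderCone_powCone (n : ℕ) {α : ℝ} (hα : Transcendental ℤ α) :
    IsAddLeftOrderCone (powCone n α) :=
  AddMonoidHom.isAddLeftOrderCone_posCone <|
    linearIndependent_iff_injective_fintypeLinearCombination.1 <|
      hα.linearIndependent_pow.comp _ Fin.val_injective

theorem powCone_single_sub_single (m : ℕ) (α : ℝ) (p q : ℤ) :
    powCone (m + 2) α (Pi.single 0 p - Pi.single 1 q) = decide (q * α < p) := by
  simp [powCone, AddMonoidHom.posCone, Fintype.linearCombination_apply_single]

theorem exists_int_mul_lt_lt_mul {α β : ℝ} (h : α < β) : ∃ p q : ℤ, q * α < p ∧ p < q * β := by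
  obtain ⟨r, hαr, hrβ⟩ := exists_rat_btwn h
  have hden : (0 : ℝ) < (r.den : ℤ) := by positivity
  have hnum : (r.num : ℝ) = (r.den : ℤ) * r := by
    exact_mod_cast (mul_comm (r : ℚ) r.den ▸ Rat.mul_den_eq_num r).symm
  exact ⟨r.num, r.den, hnum ▸ mul_lt_mul_of_pos_left hαr hden,
    hnum ▸ mul_lt_mul_of_pos_left hrβ hden⟩

theorem powCone_injective (m : ℕ) : Function.Injective (powCone (m + 2)) := by
  refine .of_lt_imp_ne fun α β hlt h => ?_
  obtain ⟨p, q, hα, hβ⟩ := exists_int_mul_lt_lt_mul hlt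
  have := congrFun h (Pi.single 0 p - Pi.single 1 q)
  simp only [powCone_single_sub_single, decide_eq_decide] at this
  exact (this.1 hα).asymm hβ

theorem not_countable_setOf_transcendental : ¬ {x : ℝ | Transcendental ℤ x}.Countable := fun h =>
  Cardinal.not_countable_real <| by
    simpa [Set.union_def, Transcendental, em'] using h.union (Algebraic.countable ℤ ℝ)

theorem stmt_12 (n : ℕ) (hn : 2 ≤ n) : ¬ (AddLOset (Fin n → ℤ)).Countable := by
  obtain ⟨m, rfl⟩ := Nat.exists_eq_add_of_le' hn
  have hmaps : Set.MapsTo (powCone (m + 2)) {α | Transcendental ℤ α} (AddLOset _) :=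
    fun _ hα => isAddLeftOrderCone_powCone _ hα
  exact fun hcount => not_countable_setOf_transcendental <|
    hmaps.countable_of_injOn (powCone_injective m).injOn hcount
end
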